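/- arXiv:1603.09076 — 4 statements merged into one kernel-verified Lean document; each statement's English description precedes it below -/
import Mathlib

section
/- Let m > 0 and r > 0. A point (p₁, p₂, z, q) with p₁ > 0, p₂ > 0, z > 0 and 0 < q < 1 satisfies (1 − q z) p₁ = 0, (r − (1 − q) z) p₂ = 0, (q p₁ + (1 − q) p₂ − 1) m z = 0 and q (1 − q)(p₁ − p₂) = 0 if and only if (p₁, p₂, z, q) = (1, 1, 1 + r, 1/(1 + r)). In other words, the rescaled system has a unique coexistence equilibrium, located at (1, 1, 1 + r, 1/(1 + r)). -/
/-! Away from the boundary the factors `p₁`, `p₂`, `m z` and `q (1 - q)` can be cancelled, leaving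
`q z = 1`, `(1 - q) z = r`, `p₁ = p₂` and `q p₁ + (1 - q) p₂ = 1`. Adding the first two gives
`z = 1 + r`, and the last two give `p₁ = p₂ = 1`. -/

section

variable {K : Type*} [Field K] {m r p₁ p₂ z q : K}

theorem equilibrium_equations_iff_reduced (hm : m ≠ 0) (hp₁ : p₁ ≠ 0) (hp₂ : p₂ ≠ 0)
    (hz : z ≠ 0) (hq0 : q ≠ 0) (hq1 : q ≠ 1) :
    ((1 - q * z) * p₁ = 0 ∧
     (r - (1 - q) * z) * p₂ = 0 ∧
     (q * p₁ + (1 - q) * p₂ - 1) * m * z = 0 ∧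
     q * (1 - q) * (p₁ - p₂) = 0)
    ↔ (1 = q * z ∧ r = (1 - q) * z ∧ q * p₁ + (1 - q) * p₂ = 1 ∧ p₁ = p₂) := by
  have hq1' : 1 - q ≠ 0 := sub_ne_zero.mpr hq1.symm
  simp only [mul_eq_zero, hm, hp₁, hp₂, hz, hq0, hq1', sub_eq_zero, or_false, false_or]

theorem reduced_equilibrium_equations_iff (hz : z ≠ 0) :
    (1 = q * z ∧ r = (1 - q) * z ∧ q * p₁ + (1 - q) * p₂ = 1 ∧ p₁ = p₂)
    ↔ (p₁ = 1 ∧ p₂ = 1 ∧ z = 1 + r ∧ q = 1 / (1 + r)) := by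
  constructor
  · rintro ⟨hqz, hr, hp, rfl⟩
    have hz_eq : z = 1 + r := by linear_combination -hr - hqz
    refine ⟨by linear_combination hp, by linear_combination hp, hz_eq, ?_⟩
    rw [← hz_eq, eq_div_iff hz, hqz]
  · rintro ⟨rfl, rfl, rfl, rfl⟩
    refine ⟨?_, ?_, ?_, rfl⟩ <;> field_simp <;> ring

end

theorem unique_coexistence_equilibrium_general (m r : ℝ) (hm : 0 < m)
    (p₁ p₂ z q : ℝ) (hp₁ : 0 < p₁) (hp₂ : 0 < p₂) (hz : 0 < z)
    (hq0 : 0 < q) (hq1 : q < 1) :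
    ((1 - q * z) * p₁ = 0 ∧
     (r - (1 - q) * z) * p₂ = 0 ∧
     (q * p₁ + (1 - q) * p₂ - 1) * m * z = 0 ∧
     q * (1 - q) * (p₁ - p₂) = 0)
    ↔ (p₁ = 1 ∧ p₂ = 1 ∧ z = 1 + r ∧ q = 1 / (1 + r)) := by
  rw [equilibrium_equations_iff_reduced hm.ne' hp₁.ne' hp₂.ne' hz.ne' hq0.ne' hq1.ne]
  exact reduced_equilibrium_equations_iff hz.ne'

/-- The rescaled 1 fast–3 slow predator–prey system has a unique coexistence
equilibrium at `(p₁, p₂, z, q) = (1, 1, 1 + r, 1/(1 + r))`. -/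
theorem unique_coexistence_equilibrium (m r : ℝ) (hm : 0 < m) (hr : 0 < r)
    (p₁ p₂ z q : ℝ) (hp₁ : 0 < p₁) (hp₂ : 0 < p₂) (hz : 0 < z)
    (hq0 : 0 < q) (hq1 : q < 1) :
    ((1 - q * z) * p₁ = 0 ∧
     (r - (1 - q) * z) * p₂ = 0 ∧
     (q * p₁ + (1 - q) * p₂ - 1) * m * z = 0 ∧
     q * (1 - q) * (p₁ - p₂) = 0)
    ↔ (p₁ = 1 ∧ p₂ = 1 ∧ z = 1 + r ∧ q = 1 / (1 + r)) :=
  unique_coexistence_equilibrium_general m r hm p₁ p₂ z q hp₁ hp₂ hz hq0 hq1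
end

section
/- For all m > 0 and 0 < r < 1, the quartic characteristic equation λ⁴ + ((m + 2r + m r²)/(1 + r)) λ² + m r = 0 has four distinct complex roots, and every root λ is purely imaginary and nonzero (i.e., Re λ = 0 and λ ≠ 0). Consequently, the coexistence equilibrium of the rescaled system is of center–center type. -/
/-!
Substituting `μ = -λ²` turns `λ⁴ + b λ² + c` into `μ² - b μ + c` with `b, c > 0`; a positive
discriminant gives two distinct positive roots `μ₁ < μ₂`, so the quartic factors as
`(λ² + μ₁)(λ² + μ₂)` and its roots are `±i√μ₁, ±i√μ₂`. For `b = (m + 2r + m r²)/(1 + r)` and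
`c = m r` the discriminant is `((m (1 + r²) - 2r)² + 4mr(1 - r)²) / (1 + r)²`, positive for `r ≠ 1`.
-/

open Complex

lemma exists_pos_lt_add_eq_mul_eq {b c : ℝ} (hc : 0 < c) (hb : 0 < b) (hd : 4 * c < b ^ 2) :
    ∃ μ₁ μ₂ : ℝ, 0 < μ₁ ∧ μ₁ < μ₂ ∧ μ₁ + μ₂ = b ∧ μ₁ * μ₂ = c := by
  set s := √(b ^ 2 - 4 * c)
  have hs : 0 < s := Real.sqrt_pos.mpr (by linarith)
  have hs_sq : s ^ 2 = b ^ 2 - 4 * c := Real.sq_sqrt (by linarith)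
  have hsb : s < b := by nlinarith
  exact ⟨(b - s) / 2, (b + s) / 2, by linarith, by linarith, by ring,
    by linear_combination (-1 / 4 : ℝ) * hs_sq⟩

lemma exists_pos_lt_sq_add_sq_eq_sq_mul_sq_eq {b c : ℝ} (hc : 0 < c) (hb : 0 < b)
    (hd : 4 * c < b ^ 2) :
    ∃ s₁ s₂ : ℝ, 0 < s₁ ∧ s₁ < s₂ ∧ s₁ ^ 2 + s₂ ^ 2 = b ∧ s₁ ^ 2 * s₂ ^ 2 = c := by
  obtain ⟨μ₁, μ₂, hμ₁, hlt, hsum, hprod⟩ := exists_pos_lt_add_eq_mul_eq hc hb hd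
  have hμ₂ : 0 < μ₂ := hμ₁.trans hlt
  refine ⟨√μ₁, √μ₂, Real.sqrt_pos.mpr hμ₁, Real.sqrt_lt_sqrt hμ₁.le hlt, ?_, ?_⟩ <;>
    rwa [Real.sq_sqrt hμ₁.le, Real.sq_sqrt hμ₂.le]

lemma sq_add_ofReal_sq_eq_zero_iff (x : ℂ) (s : ℝ) :
    x ^ 2 + (s : ℂ) ^ 2 = 0 ↔ x = I * s ∨ x = -(I * s) := by
  have hfactor : x ^ 2 + (s : ℂ) ^ 2 = (x - I * s) * (x + I * s) := by
    linear_combination (s : ℂ) ^ 2 * I_sq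
  rw [hfactor, mul_eq_zero, sub_eq_zero, add_eq_zero_iff_eq_neg]

noncomputable def imagPairs (s₁ s₂ : ℝ) : Finset ℂ :=
  {I * s₁, -(I * s₁), I * s₂, -(I * s₂)}

lemma quartic_eq_zero_iff_mem_imagPairs {s₁ s₂ : ℝ} (x : ℂ) :
    x ^ 4 + ((s₁ ^ 2 + s₂ ^ 2 : ℝ) : ℂ) * x ^ 2 + ((s₁ ^ 2 * s₂ ^ 2 : ℝ) : ℂ) = 0 ↔
      x ∈ imagPairs s₁ s₂ := by
  have hfactor : x ^ 4 + ((s₁ ^ 2 + s₂ ^ 2 : ℝ) : ℂ) * x ^ 2 + ((s₁ ^ 2 * s₂ ^ 2 : ℝ) : ℂ)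
      = (x ^ 2 + (s₁ : ℂ) ^ 2) * (x ^ 2 + (s₂ : ℂ) ^ 2) := by
    push_cast; ring
  rw [hfactor, mul_eq_zero, sq_add_ofReal_sq_eq_zero_iff, sq_add_ofReal_sq_eq_zero_iff]
  simp only [imagPairs, Finset.mem_insert, Finset.mem_singleton, or_assoc]

lemma card_imagPairs {s₁ s₂ : ℝ} (h₁ : 0 < s₁) (h₁₂ : s₁ < s₂) : (imagPairs s₁ s₂).card = 4 :=
  Finset.card_eq_four.mpr ⟨_, _, _, _, by
    refine ⟨?_, ?_, ?_, ?_, ?_, ?_, rfl⟩ <;> intro h <;> have := congrArg im h <;>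
      simp at this <;> linarith⟩

lemma re_eq_zero_and_ne_zero_of_mem_imagPairs {s₁ s₂ : ℝ} (h₁ : 0 < s₁) (h₂ : 0 < s₂) {x : ℂ}
    (hx : x ∈ imagPairs s₁ s₂) : x.re = 0 ∧ x ≠ 0 := by
  simp only [imagPairs, Finset.mem_insert, Finset.mem_singleton] at hx
  rcases hx with rfl | rfl | rfl | rfl <;> simp [h₁.ne', h₂.ne']

lemma four_mul_lt_coexistence_coeff_sq {m r : ℝ} (hm : 0 < m) (hr0 : 0 < r) (hr1 : r ≠ 1) :
    4 * (m * r) < ((m + 2 * r + m * r ^ 2) / (1 + r)) ^ 2 := by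
  have hden : 0 < 1 + r := by linarith
  have hdiscrim : ((m + 2 * r + m * r ^ 2) / (1 + r)) ^ 2 - 4 * (m * r)
      = ((m * (1 + r ^ 2) - 2 * r) ^ 2 + 4 * m * r * (1 - r) ^ 2) / (1 + r) ^ 2 := by
    field_simp; ring
  have hgap : 0 < 4 * m * r * (1 - r) ^ 2 :=
    mul_pos (by positivity) (sq_pos_of_ne_zero (sub_ne_zero.mpr hr1.symm))
  rw [← sub_pos, hdiscrim]
  exact div_pos (add_pos_of_nonneg_of_pos (sq_nonneg _) hgap) (by positivity)

/-- For all `m > 0` and `0 < r < 1`, the characteristic equation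
`λ⁴ + ((m + 2r + m r²)/(1 + r)) λ² + m r = 0` has four distinct complex roots,
all of which are purely imaginary and nonzero; hence the coexistence
equilibrium is of center–center type. -/
theorem characteristic_roots_purely_imaginary (m r : ℝ)
    (hm : 0 < m) (hr0 : 0 < r) (hr1 : r < 1) :
    (∃ S : Finset ℂ, S.card = 4 ∧
      ∀ x : ℂ, (x ^ 4 + (((m + 2 * r + m * r ^ 2) / (1 + r) : ℝ) : ℂ) * x ^ 2
          + ((m * r : ℝ) : ℂ) = 0 ↔ x ∈ S)) ∧
    (∀ x : ℂ, x ^ 4 + (((m + 2 * r + m * r ^ 2) / (1 + r) : ℝ) : ℂ) * x ^ 2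
        + ((m * r : ℝ) : ℂ) = 0 → x.re = 0 ∧ x ≠ 0) := by
  obtain ⟨s₁, s₂, h₁, h₁₂, hsum, hprod⟩ := exists_pos_lt_sq_add_sq_eq_sq_mul_sq_eq
    (mul_pos hm hr0) (by positivity)
    (four_mul_lt_coexistence_coeff_sq hm hr0 hr1.ne)
  rw [← hsum, ← hprod]
  exact ⟨⟨imagPairs s₁ s₂, card_imagPairs h₁ h₁₂, quartic_eq_zero_iff_mem_imagPairs⟩,
    fun x hx => re_eq_zero_and_ne_zero_of_mem_imagPairs h₁ (h₁.trans h₁₂)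
      ((quartic_eq_zero_iff_mem_imagPairs x).mp hx)⟩
end

section
/- Let m > 0 and r > 0, let I ⊆ ℝ be an open interval, and let p₁, p₂, z : I → ℝ be differentiable functions with p₁(t) > 0 and z(t) > 0 for all t ∈ I, satisfying the slow flow on M₁: dp₁/dt = (1 − z) p₁, dp₂/dt = r p₂, dz/dt = (p₁ − 1) m z on I. Then the function t ↦ m·log(p₁(t)) − m·p₁(t) + log(z(t)) − z(t) is constant on I; that is, H₁ is a conserved quantity of the slow flow on M₁. -/
/-!
`H₁` is the classical Lotka–Volterra first integral for the prey `p₁` and the predator `z`: along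
`p₁' = (1 − z) p₁`, `z' = m (p₁ − 1) z` the logarithmic derivatives are `1 − z` and `m (p₁ − 1)`, so
`d/dt H₁ = m (1 − z) − m (1 − z) p₁ + m (p₁ − 1) − m (p₁ − 1) z = 0`, and a function with vanishing
derivative on an interval is constant.
-/

open Real Set

theorem HasDerivAt.log_of_mul_self {f : ℝ → ℝ} {c t : ℝ} (hf : HasDerivAt f (c * f t) t)
    (ht : f t ≠ 0) : HasDerivAt (fun s => Real.log (f s)) c t :=
  (hf.log ht).congr_deriv (mul_div_cancel_right₀ c ht)

theorem IsOpen.is_const_of_hasDerivAt_zero {E : Type*} [NormedAddCommGroup E] [NormedSpace ℝ E]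
    {f : ℝ → E} {s : Set ℝ} (hs : IsOpen s) (hs' : IsPreconnected s)
    (hf : ∀ t ∈ s, HasDerivAt f 0 t) {x y : ℝ} (hx : x ∈ s) (hy : y ∈ s) : f x = f y :=
  hs.is_const_of_deriv_eq_zero hs' (fun t ht => (hf t ht).differentiableAt.differentiableWithinAt)
    (fun t ht => (hf t ht).deriv) hx hy

/-- First integral of the Lotka–Volterra system `x' = (α − β y) x`, `y' = (δ x − γ) y`. -/
noncomputable def lotkaVolterraIntegral (α β γ δ x y : ℝ) : ℝ :=
  γ * log x - δ * x + α * log y - β * y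

theorem hasDerivAt_lotkaVolterraIntegral {α β γ δ t : ℝ} {x y : ℝ → ℝ}
    (hx : HasDerivAt x ((α - β * y t) * x t) t) (hy : HasDerivAt y ((δ * x t - γ) * y t) t)
    (hx₀ : x t ≠ 0) (hy₀ : y t ≠ 0) :
    HasDerivAt (fun s => lotkaVolterraIntegral α β γ δ (x s) (y s)) 0 t := by
  have h := ((((hx.log_of_mul_self hx₀).const_mul γ).sub (hx.const_mul δ)).add
    ((hy.log_of_mul_self hy₀).const_mul α)).sub (hy.const_mul β)
  exact h.congr_deriv (by ring)

theorem H1_conserved_on_M1_general (m : ℝ) (a b : ℝ)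
    (p₁ z : ℝ → ℝ)
    (hp₁pos : ∀ t ∈ Set.Ioo a b, 0 < p₁ t)
    (hzpos : ∀ t ∈ Set.Ioo a b, 0 < z t)
    (h1 : ∀ t ∈ Set.Ioo a b, HasDerivAt p₁ ((1 - z t) * p₁ t) t)
    (h3 : ∀ t ∈ Set.Ioo a b, HasDerivAt z ((p₁ t - 1) * m * z t) t) :
    ∀ s ∈ Set.Ioo a b, ∀ t ∈ Set.Ioo a b,
      m * Real.log (p₁ s) - m * p₁ s + Real.log (z s) - z s
        = m * Real.log (p₁ t) - m * p₁ t + Real.log (z t) - z t := by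
  intro s hs t ht
  have hH : ∀ u ∈ Ioo a b,
      HasDerivAt (fun v => lotkaVolterraIntegral 1 1 m m (p₁ v) (z v)) 0 u := fun u hu =>
    hasDerivAt_lotkaVolterraIntegral (by simpa using h1 u hu) ((h3 u hu).congr_deriv (by ring))
      (hp₁pos u hu).ne' (hzpos u hu).ne'
  simpa only [lotkaVolterraIntegral, one_mul] using
    isOpen_Ioo.is_const_of_hasDerivAt_zero isPreconnected_Ioo hH hs ht

/-- `H₁(p₁, z) = m log p₁ − m p₁ + log z − z` is a conserved quantity of the
slow flow on the hyperplane `M₁`. -/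
theorem H1_conserved_on_M1 (m r : ℝ) (hm : 0 < m) (hr : 0 < r) (a b : ℝ)
    (p₁ p₂ z : ℝ → ℝ)
    (hp₁pos : ∀ t ∈ Set.Ioo a b, 0 < p₁ t)
    (hzpos : ∀ t ∈ Set.Ioo a b, 0 < z t)
    (h1 : ∀ t ∈ Set.Ioo a b, HasDerivAt p₁ ((1 - z t) * p₁ t) t)
    (h2 : ∀ t ∈ Set.Ioo a b, HasDerivAt p₂ (r * p₂ t) t)
    (h3 : ∀ t ∈ Set.Ioo a b, HasDerivAt z ((p₁ t - 1) * m * z t) t) :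
    ∀ s ∈ Set.Ioo a b, ∀ t ∈ Set.Ioo a b,
      m * Real.log (p₁ s) - m * p₁ s + Real.log (z s) - z s
        = m * Real.log (p₁ t) - m * p₁ t + Real.log (z t) - z t :=
  H1_conserved_on_M1_general m a b p₁ z hp₁pos hzpos h1 h3
end

section
/- Let m > 0, t* ∈ ℝ, and let p₁, p₂, z : ℝ → ℝ be functions with z(t*) > 0 and p₁(t*) < p₂(t*). Suppose z has one-sided derivatives at t* given by the two slow flows: the left-sided derivative of z at t* (within (−∞, t*]) equals (p₁(t*) − 1)·m·z(t*) and the right-sided derivative of z at t* (within [t*, ∞)) equals (p₂(t*) − 1)·m·z(t*). Then z does not have a local maximum at t*. Combined with the analogous statement at jumps from M₀ to M₁, this shows that if the predator density has a local extremum at a jump point, that extremum must be a local minimum. -/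
open Set

theorem IsLocalMaxOn.hasDerivWithinAt_Ici_nonpos {f : ℝ → ℝ} {a f' : ℝ}
    (h : IsLocalMaxOn f (Ici a) a) (hf : HasDerivWithinAt f f' (Ici a) a) : f' ≤ 0 := by
  have hdir : (1 : ℝ) ∈ posTangentConeAt (Ici a) a :=
    mem_posTangentConeAt_of_segment_subset
      ((convex_Ici a).segment_subset self_mem_Ici (by simp))
  simpa using h.hasFDerivWithinAt_nonpos hf.hasFDerivWithinAt hdir

theorem IsLocalMaxOn.hasDerivWithinAt_Iic_nonneg {f : ℝ → ℝ} {a f' : ℝ}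
    (h : IsLocalMaxOn f (Iic a) a) (hf : HasDerivWithinAt f f' (Iic a) a) : 0 ≤ f' := by
  have hdir : (-1 : ℝ) ∈ posTangentConeAt (Iic a) a :=
    mem_posTangentConeAt_of_segment_subset
      ((convex_Iic a).segment_subset self_mem_Iic (by simp))
  simpa using h.hasFDerivWithinAt_nonpos hf.hasFDerivWithinAt hdir

/-- At a jump point from `M₁` to `M₀` (where `p₁ < p₂`), the predator density
`z` cannot have a local maximum; hence any local extremum of the predator at a
jump point is a local minimum. -/
theorem no_predator_max_at_jump_M1_to_M0 (m : ℝ) (hm : 0 < m) (tstar : ℝ)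
    (p₁ p₂ z : ℝ → ℝ)
    (hz : 0 < z tstar) (hp : p₁ tstar < p₂ tstar)
    (hleft : HasDerivWithinAt z ((p₁ tstar - 1) * m * z tstar) (Set.Iic tstar) tstar)
    (hright : HasDerivWithinAt z ((p₂ tstar - 1) * m * z tstar) (Set.Ici tstar) tstar) :
    ¬ IsLocalMax z tstar := by
  intro hmax
  have hright_nonpos := (hmax.on _).hasDerivWithinAt_Ici_nonpos hright
  have hleft_nonneg := (hmax.on _).hasDerivWithinAt_Iic_nonneg hleft
  have hgap : 0 < (p₂ tstar - p₁ tstar) * (m * z tstar) :=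
    mul_pos (sub_pos.2 hp) (mul_pos hm hz)
  linarith
end
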